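/- Fix reals x̄ and ⌊x⌋, a step size ε_RD > 0, and r = (x̄ − ⌊x⌋)/ε_RD ∈ [0,1]. Let X be a binomial random variable with N trials and success probability p ∈ (0,1] where |p − r| ≤ ε_B, and define x_QR = (X/N)·ε_RD + ⌊x⌋. Then for any α ∈ (0,2) with 3·ln(2/α) < N·p, with probability at least 1 − α it holds that |x_QR − x̄| ≤ ε_RD·(√(3·ln(2/α)/N) + ε_B). -/

import Mathlib

/-!
The rounded value deviates from `x̄` by `ε_RD · |X/N - r|`, and `|X/N - r| ≤ |X/N - p| + ε_B`.
The deviation `|X/N - p|` is controlled by a Chernoff bound: tilting the lower tail of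
`Binomial(N, θ)` by `e^{-t k}` and using the binomial theorem gives
`(1 - θ + θ e^{-t})^N e^{t N (θ - t)} ≤ e^{-N t² / 2}`, and reflecting `k ↦ N - k` turns the
upper tail of `Binomial(N, θ)` into the lower tail of `Binomial(N, 1 - θ)`. For
`t = √(3 log(2/α) / N)` each tail is at most `α / 2`.
-/

open MeasureTheory Real Finset

lemma Real.exp_neg_le_one_sub_add_sq_div_two {t : ℝ} (ht : 0 ≤ t) :
    exp (-t) ≤ 1 - t + t ^ 2 / 2 := by
  have hq : 0 < 1 + t + t ^ 2 / 2 := by positivity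
  calc exp (-t) = (exp t)⁻¹ := exp_neg t
    _ ≤ (1 + t + t ^ 2 / 2)⁻¹ := inv_anti₀ hq (quadratic_le_exp_of_nonneg ht)
    _ ≤ 1 - t + t ^ 2 / 2 := by
      -- `(1 + t + t²/2) (1 - t + t²/2) = 1 + t⁴/4`
      rw [inv_le_iff_one_le_mul₀' hq]
      nlinarith [pow_nonneg ht 4]

lemma mul_exp_neg_add_one_sub_le {θ t : ℝ} (hθ : 0 ≤ θ) (ht : 0 ≤ t) :
    θ * exp (-t) + (1 - θ) ≤ exp (θ * (-t + t ^ 2 / 2)) :=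
  calc θ * exp (-t) + (1 - θ) ≤ θ * (-t + t ^ 2 / 2) + 1 := by
        nlinarith [mul_le_mul_of_nonneg_left (exp_neg_le_one_sub_add_sq_div_two ht) hθ]
    _ ≤ exp (θ * (-t + t ^ 2 / 2)) := add_one_le_exp _

def binomialProb (N : ℕ) (θ : ℝ) (k : ℕ) : ℝ :=
  N.choose k * θ ^ k * (1 - θ) ^ (N - k)

section Binomial

variable {N k : ℕ} {θ t : ℝ}

lemma binomialProb_nonneg (hθ0 : 0 ≤ θ) (hθ1 : θ ≤ 1) : 0 ≤ binomialProb N θ k := by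
  have := sub_nonneg.2 hθ1
  unfold binomialProb
  positivity

lemma sum_binomialProb_mul_pow (N : ℕ) (θ c : ℝ) :
    ∑ k ∈ range (N + 1), binomialProb N θ k * c ^ k = (θ * c + (1 - θ)) ^ N := by
  rw [add_pow]
  refine sum_congr rfl fun k _ => ?_
  unfold binomialProb
  ring

lemma binomialProb_reflect (hk : k ≤ N) :
    binomialProb N θ (N - k) = binomialProb N (1 - θ) k := by
  unfold binomialProb
  rw [Nat.choose_symm hk, Nat.sub_sub_self hk, sub_sub_cancel]
  ring

lemma sum_binomialProb_lower_tail_le (hθ0 : 0 ≤ θ) (hθ1 : θ ≤ 1) (ht : 0 ≤ t) :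
    ∑ k ∈ (range (N + 1)).filter (fun k : ℕ => (k : ℝ) ≤ N * (θ - t)), binomialProb N θ k
      ≤ exp (-(N * t ^ 2 / 2)) := by
  have hb : ∀ k, 0 ≤ binomialProb N θ k := fun k => binomialProb_nonneg hθ0 hθ1
  calc _ ≤ ∑ k ∈ range (N + 1), binomialProb N θ k * exp (t * (N * (θ - t) - k)) := by
        rw [sum_filter]
        gcongr with k
        split_ifs with hk
        · exact le_mul_of_one_le_right (hb k) (one_le_exp (mul_nonneg ht (by linarith)))
        · exact mul_nonneg (hb k) (exp_pos _).le
    _ = exp (t * N * (θ - t)) * (θ * exp (-t) + (1 - θ)) ^ N := by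
      rw [← sum_binomialProb_mul_pow, mul_sum]
      refine sum_congr rfl fun k _ => ?_
      rw [← exp_nat_mul, mul_left_comm, ← exp_add]
      ring_nf
    _ ≤ exp (t * N * (θ - t)) * exp (θ * (-t + t ^ 2 / 2)) ^ N := by
      have := sub_nonneg.2 hθ1
      gcongr
      exact mul_exp_neg_add_one_sub_le hθ0 ht
    _ = exp (-(N * t ^ 2 / 2) - N * (1 - θ) * t ^ 2 / 2) := by
      rw [← exp_nat_mul, ← exp_add]
      ring_nf
    _ ≤ exp (-(N * t ^ 2 / 2)) := by
      have : 0 ≤ N * (1 - θ) * t ^ 2 := by have := sub_nonneg.2 hθ1; positivity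
      gcongr
      linarith

lemma sum_binomialProb_upper_tail_le (hθ0 : 0 ≤ θ) (hθ1 : θ ≤ 1) (ht : 0 ≤ t) :
    ∑ k ∈ (range (N + 1)).filter (fun k : ℕ => N * (θ + t) ≤ (k : ℝ)), binomialProb N θ k
      ≤ exp (-(N * t ^ 2 / 2)) :=
  calc _ = ∑ k ∈ (range (N + 1)).filter (fun k : ℕ => (k : ℝ) ≤ N * ((1 - θ) - t)),
            binomialProb N (1 - θ) k := by
        rw [sum_filter, sum_filter, ← sum_range_reflect]
        refine sum_congr rfl fun k hk => ?_
        have hkN : k ≤ N := Nat.lt_succ_iff.1 (mem_range.1 hk)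
        rw [Nat.add_sub_cancel, binomialProb_reflect hkN, Nat.cast_sub hkN]
        congr 1
        exact propext ⟨fun h => by linarith, fun h => by linarith⟩
    _ ≤ _ := sum_binomialProb_lower_tail_le (sub_nonneg.2 hθ1) (by linarith) ht

end Binomial

section BinomialVariable

variable {Ω : Type*} [MeasurableSpace Ω] {μ : Measure Ω} {N : ℕ} {p : ℝ} {X : Ω → ℕ}

lemma ae_le_of_binomial (hX : ∀ k, μ {ω | X ω = k} = ENNReal.ofReal (binomialProb N p k)) :
    ∀ᵐ ω ∂μ, X ω ≤ N := by
  have hnull : ∀ k ∈ {k | N < k}, μ {ω | X ω = k} = 0 := fun k hk => by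
    rw [hX, binomialProb, Nat.choose_eq_zero_of_lt hk]
    simp
  refine measure_mono_null (fun ω (hω : ¬ X ω ≤ N) => ?_)
    ((measure_biUnion_null_iff (Set.to_countable _)).2 hnull)
  exact Set.mem_biUnion (not_le.1 hω) rfl

lemma measure_le_sum_binomialProb
    (hX : ∀ k, μ {ω | X ω = k} = ENNReal.ofReal (binomialProb N p k))
    (hp0 : 0 ≤ p) (hp1 : p ≤ 1) (P : ℕ → Prop) [DecidablePred P] :
    μ {ω | P (X ω)} ≤ ENNReal.ofReal (∑ k ∈ range (N + 1) with P k, binomialProb N p k) :=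
  calc μ {ω | P (X ω)} ≤ μ (⋃ k ∈ (range (N + 1)).filter P, {ω | X ω = k}) := by
        refine measure_mono_ae ?_
        filter_upwards [ae_le_of_binomial hX] with ω hω hP
        exact Set.mem_biUnion (mem_filter.2 ⟨mem_range.2 (Nat.lt_succ_of_le hω), hP⟩) rfl
    _ ≤ ∑ k ∈ range (N + 1) with P k, μ {ω | X ω = k} := measure_biUnion_finset_le _ _
    _ = _ := by
      rw [ENNReal.ofReal_sum_of_nonneg fun k _ => binomialProb_nonneg hp0 hp1]
      exact sum_congr rfl fun k _ => hX k

lemma measure_lt_abs_div_sub_le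
    (hX : ∀ k, μ {ω | X ω = k} = ENNReal.ofReal (binomialProb N p k))
    (hp0 : 0 ≤ p) (hp1 : p ≤ 1) (hN : 0 < N) {t : ℝ} (ht : 0 ≤ t) :
    μ {ω | t < |(X ω : ℝ) / N - p|} ≤ ENNReal.ofReal (2 * exp (-(N * t ^ 2 / 2))) := by
  have hN' : (0 : ℝ) < N := Nat.cast_pos.2 hN
  have htails : {ω | t < |(X ω : ℝ) / N - p|}
      ⊆ {ω | (X ω : ℝ) ≤ N * (p - t)} ∪ {ω | N * (p + t) ≤ (X ω : ℝ)} := by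
    intro ω (hω : t < _)
    rcases lt_abs.1 hω with hup | hlow
    · have := (lt_div_iff₀ hN').1 (by linarith : p + t < (X ω : ℝ) / N)
      exact Or.inr (show N * (p + t) ≤ (X ω : ℝ) by linarith)
    · have := (div_lt_iff₀ hN').1 (by linarith : (X ω : ℝ) / N < p - t)
      exact Or.inl (show (X ω : ℝ) ≤ N * (p - t) by linarith)
  calc _ ≤ _ := (measure_mono htails).trans (measure_union_le _ _)
    _ ≤ ENNReal.ofReal (exp (-(N * t ^ 2 / 2))) + ENNReal.ofReal (exp (-(N * t ^ 2 / 2))) :=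
      add_le_add
        ((measure_le_sum_binomialProb hX hp0 hp1 fun k => (k : ℝ) ≤ N * (p - t)).trans
          (ENNReal.ofReal_le_ofReal (sum_binomialProb_lower_tail_le hp0 hp1 ht)))
        ((measure_le_sum_binomialProb hX hp0 hp1 fun k => N * (p + t) ≤ (k : ℝ)).trans
          (ENNReal.ofReal_le_ofReal (sum_binomialProb_upper_tail_le hp0 hp1 ht)))
    _ = _ := by rw [← ENNReal.ofReal_add (exp_pos _).le (exp_pos _).le, two_mul]

end BinomialVariable

lemma ofReal_one_sub_le_measure {Ω : Type*} [MeasurableSpace Ω] {μ : Measure Ω}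
    [IsProbabilityMeasure μ] {s : Set Ω} {a : ℝ} (ha : 0 ≤ a) (h : μ sᶜ ≤ ENNReal.ofReal a) :
    ENNReal.ofReal (1 - a) ≤ μ s :=
  calc ENNReal.ofReal (1 - a) = μ Set.univ - ENNReal.ofReal a := by
        rw [ENNReal.ofReal_sub _ ha, ENNReal.ofReal_one, measure_univ]
    _ ≤ μ Set.univ - μ sᶜ := tsub_le_tsub_left h _
    _ ≤ μ s := tsub_le_iff_right.2 (measure_univ_le_add_compl s)

lemma abs_mul_add_sub_le {y r xbar xfl ε δ : ℝ} (hε : 0 < ε) (hr : r = (xbar - xfl) / ε)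
    (hy : |y - r| ≤ δ) : |y * ε + xfl - xbar| ≤ ε * δ := by
  have hsplit : y * ε + xfl - xbar = (y - r) * ε := by
    rw [hr]
    field_simp
    ring
  rw [hsplit, abs_mul, abs_of_pos hε, mul_comm]
  exact mul_le_mul_of_nonneg_left hy hε.le

theorem quantum_rounding_error_biased_general
    {Ω : Type*} [MeasurableSpace Ω] (μ : Measure Ω) [IsProbabilityMeasure μ]
    (xbar xfl εRD : ℝ) (hε : 0 < εRD)
    (r : ℝ) (hrdef : r = (xbar - xfl) / εRD)
    (p εB : ℝ) (hp : p ∈ Set.Ioc (0 : ℝ) 1) (hbias : |p - r| ≤ εB)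
    (N : ℕ) (X : Ω → ℕ)
    (hX : ∀ k : ℕ, μ {ω | X ω = k} =
      ENNReal.ofReal ((N.choose k : ℝ) * p ^ k * (1 - p) ^ (N - k)))
    (α : ℝ) (hα : α ∈ Set.Ioo (0 : ℝ) 2)
    (h : 3 * Real.log (2 / α) < N * p) :
    μ {ω | |((X ω : ℝ) / N * εRD + xfl) - xbar| ≤
        εRD * (Real.sqrt (3 * Real.log (2 / α) / N) + εB)} ≥
      ENNReal.ofReal (1 - α) := by
  obtain ⟨hα0, hα2⟩ := hα
  obtain ⟨hp0, hp1⟩ := hp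
  have hL : 0 < log (2 / α) := log_pos (by rw [lt_div_iff₀ hα0]; linarith)
  have hN : (0 : ℝ) < N := by nlinarith
  set t := √(3 * log (2 / α) / N)
  have htail : 2 * exp (-(N * t ^ 2 / 2)) ≤ α := by
    have hexp : exp (-(N * t ^ 2 / 2)) ≤ exp (-log (2 / α)) := by
      rw [sq_sqrt (by positivity), mul_div_cancel₀ _ hN.ne']
      gcongr
      linarith
    rw [exp_neg (log _), exp_log (by positivity), inv_div] at hexp
    linarith
  have hdev := measure_lt_abs_div_sub_le hX hp0.le hp1 (Nat.cast_pos.1 hN) (sqrt_nonneg _ : 0 ≤ t)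
  calc ENNReal.ofReal (1 - α) ≤ ENNReal.ofReal (1 - 2 * exp (-(N * t ^ 2 / 2))) :=
        ENNReal.ofReal_le_ofReal (by linarith)
    _ ≤ μ {ω | |(X ω : ℝ) / N - p| ≤ t} := ofReal_one_sub_le_measure (by positivity)
        (by simpa only [Set.compl_ofPred, not_le] using hdev)
    _ ≤ _ := measure_mono fun ω hω =>
      abs_mul_add_sub_le hε hrdef ((abs_sub_le _ p _).trans (add_le_add hω hbias))

/-- Error bound for quantum rounding with biased rotations: if each sample
rounds up with a biased probability `p` with `|p - r| ≤ ε_B` instead of the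
ideal `r = (x̄ - ⌊x⌋)/ε_RD ∈ [0,1]`, so `X ~ Binomial(N, p)`, then
`x_QR = (X/N)·ε_RD + ⌊x⌋` satisfies
`|x_QR - x̄| ≤ ε_RD·(√(3·ln(2/α)/N) + ε_B)` with probability at least `1 - α`. -/
theorem quantum_rounding_error_biased
    {Ω : Type*} [MeasurableSpace Ω] (μ : Measure Ω) [IsProbabilityMeasure μ]
    (xbar xfl εRD : ℝ) (hε : 0 < εRD)
    (r : ℝ) (hrdef : r = (xbar - xfl) / εRD) (hr : r ∈ Set.Icc (0 : ℝ) 1)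
    (p εB : ℝ) (hp : p ∈ Set.Ioc (0 : ℝ) 1) (hbias : |p - r| ≤ εB)
    (N : ℕ) (X : Ω → ℕ) (hXmeas : Measurable X)
    (hX : ∀ k : ℕ, μ {ω | X ω = k} =
      ENNReal.ofReal ((N.choose k : ℝ) * p ^ k * (1 - p) ^ (N - k)))
    (α : ℝ) (hα : α ∈ Set.Ioo (0 : ℝ) 2)
    (h : 3 * Real.log (2 / α) < N * p) :
    μ {ω | |((X ω : ℝ) / N * εRD + xfl) - xbar| ≤
        εRD * (Real.sqrt (3 * Real.log (2 / α) / N) + εB)} ≥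
      ENNReal.ofReal (1 - α) :=
  quantum_rounding_error_biased_general μ xbar xfl εRD hε r hrdef p εB hp hbias N X hX α hα h
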